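/- Let g ≥ 1, r ≥ 0 and n ≥ 2, and let 1 ≤ i ≤ n−1. Then in the group G(g,r,n) the following equalities hold: A_{i−1}A_{i+1} = v_i A_i v_i A_i and A_{i−1}A_{i+1} = A_i v_i A_i v_i (relation (T1) in the proof of Theorem 3.1). -/

import Mathlib

/-!
Since `x_r` commutes with `x_{r+1}` and with every `v_k`, the powers of `x_r` on both sides
collect to `x_r^{2-2i}`, and it remains to prove the relations for `Δ_i = (t v_1 ⋯ v_{i-1})^i`,
`t = x_{r+1}`. Now `t, v_1, …, v_{n-1}` satisfy the Artin relations of type `B_n`, and for such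
elements `Δ_i` is central in `⟨t, v_1, …, v_{i-1}⟩` and `Δ_{i+1} = Δ_i T_i`, where
`T_i = v_i ⋯ v_1 t v_1 ⋯ v_i` satisfies `T_i = v_i T_{i-1} v_i`. Hence
`Δ_{i-1}Δ_{i+1} = Δ_iΔ_{i-1}v_iT_{i-1}v_i = Δ_iv_iΔ_{i-1}T_{i-1}v_i = Δ_iv_iΔ_iv_i`,
and conjugating by `Δ_i`, which commutes with `Δ_{i-1}Δ_{i+1}`, gives `v_iΔ_iv_iΔ_i`.
The factorisation `Δ_{i+1} = Δ_i T_i` comes from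
`(t v_1 ⋯ v_m)^k = (t v_1 ⋯ v_{m-1})^k v_m ⋯ v_{m-k+1}` for `k ≤ m`, an induction driven by the
fact that conjugation by `t v_1 ⋯ v_{m-1}` sends `v_j` to `v_{j+1}` for `j < m - 1`.
-/

namespace LabruereParis

/-- `altWord a b m` is the alternating word `prod(a,b,m) = abab⋯` of length `m`. -/
def altWord {α : Type*} (a b : α) : ℕ → FreeGroup α
  | 0 => 1
  | k + 1 => FreeGroup.of a * altWord b a k

/-- The vertex set of the Coxeter graph `Γ_{g,r,n}`:
`Sum.inl i` is `x_i` (`0 ≤ i ≤ r+1`), `Sum.inr (Sum.inl j)` is `y_{j+1}`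
(`1 ≤ j+1 ≤ 2g-1`), the `Unit` vertex is `z`, the next summand indexes
`u_1,…,u_r`, and the last summand indexes `v_1,…,v_{n-1}`. -/
abbrev S (g r n : ℕ) := Fin (r + 2) ⊕ Fin (2 * g - 1) ⊕ Unit ⊕ Fin r ⊕ Fin (n - 1)

/-- The Coxeter matrix of `Γ_{g,r,n}`: `m(x_i,y_1) = 3`, `m(y_j,y_{j+1}) = 3`,
`m(z,y_3) = 3`, `m(x_{r+1},v_1) = 4`, `m(v_j,v_{j+1}) = 3`, and label `2`
for every other pair of distinct vertices. -/
def cox (g r n : ℕ) : S g r n → S g r n → ℕ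
  | Sum.inl _, Sum.inr (Sum.inl j) => if (j : ℕ) = 0 then 3 else 2
  | Sum.inr (Sum.inl j), Sum.inl _ => if (j : ℕ) = 0 then 3 else 2
  | Sum.inr (Sum.inl j), Sum.inr (Sum.inl k) =>
      if j = k then 1 else if (j : ℕ) + 1 = (k : ℕ) ∨ (k : ℕ) + 1 = (j : ℕ) then 3 else 2
  | Sum.inr (Sum.inr (Sum.inl _)), Sum.inr (Sum.inl j) => if (j : ℕ) = 2 then 3 else 2
  | Sum.inr (Sum.inl j), Sum.inr (Sum.inr (Sum.inl _)) => if (j : ℕ) = 2 then 3 else 2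
  | Sum.inl i, Sum.inr (Sum.inr (Sum.inr (Sum.inr k))) =>
      if (i : ℕ) = r + 1 ∧ (k : ℕ) = 0 then 4 else 2
  | Sum.inr (Sum.inr (Sum.inr (Sum.inr k))), Sum.inl i =>
      if (i : ℕ) = r + 1 ∧ (k : ℕ) = 0 then 4 else 2
  | Sum.inr (Sum.inr (Sum.inr (Sum.inr j))), Sum.inr (Sum.inr (Sum.inr (Sum.inr k))) =>
      if j = k then 1 else if (j : ℕ) + 1 = (k : ℕ) ∨ (k : ℕ) + 1 = (j : ℕ) then 3 else 2
  | a, b => if a = b then 1 else 2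

/-- The generator `x_i` of the free group (`0 ≤ i ≤ r+1`; junk value `1` out of range). -/
def fx (g r n i : ℕ) : FreeGroup (S g r n) :=
  if h : i < r + 2 then FreeGroup.of (Sum.inl ⟨i, h⟩) else 1

/-- The generator `y_j` (`1 ≤ j ≤ 2g-1`; junk value `1` out of range). -/
def fy (g r n j : ℕ) : FreeGroup (S g r n) :=
  if h : 1 ≤ j ∧ j ≤ 2 * g - 1 then FreeGroup.of (Sum.inr (Sum.inl ⟨j - 1, by omega⟩)) else 1

/-- The generator `z`. -/
def fz (g r n : ℕ) : FreeGroup (S g r n) := FreeGroup.of (Sum.inr (Sum.inr (Sum.inl ())))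

/-- The generator `u_i` (`1 ≤ i ≤ r`; junk value `1` out of range). -/
def fu (g r n i : ℕ) : FreeGroup (S g r n) :=
  if h : 1 ≤ i ∧ i ≤ r then
    FreeGroup.of (Sum.inr (Sum.inr (Sum.inr (Sum.inl ⟨i - 1, by omega⟩)))) else 1

/-- The generator `v_i` (`1 ≤ i ≤ n-1`; junk value `1` out of range). -/
def fv (g r n i : ℕ) : FreeGroup (S g r n) :=
  if h : 1 ≤ i ∧ i ≤ n - 1 then
    FreeGroup.of (Sum.inr (Sum.inr (Sum.inr (Sum.inr ⟨i - 1, by omega⟩)))) else 1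

/-- The Artin relators of `Γ_{g,r,n}`. -/
def artinRels (g r n : ℕ) : Set (FreeGroup (S g r n)) :=
  {w | ∃ a b : S g r n, a ≠ b ∧
      w = altWord a b (cox g r n a b) * (altWord b a (cox g r n a b))⁻¹}

/-- `W(i,j) = (x_jy_1x_{i+1}x_jy_1x_j)⁻¹ · x_i · (x_jy_1x_{i+1}x_jy_1x_j)`. -/
def Wrel (g r n i j : ℕ) : FreeGroup (S g r n) :=
  (fx g r n j * fy g r n 1 * fx g r n (i + 1) * fx g r n j * fy g r n 1 * fx g r n j)⁻¹ *
    fx g r n i *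
    (fx g r n j * fy g r n 1 * fx g r n (i + 1) * fx g r n j * fy g r n 1 * fx g r n j)

/-- The relators (R1)–(R8b) of Theorem 3.1 of Labruère–Paris. -/
def extraRels (g r n : ℕ) : Set (FreeGroup (S g r n)) :=
  {w |
    -- (R1)
    (2 ≤ g ∧ w = (fy g r n 1 * fy g r n 2 * fy g r n 3 * fz g r n) ^ 10 *
        ((fx g r n 0 * fy g r n 1 * fy g r n 2 * fy g r n 3 * fz g r n) ^ 6)⁻¹) ∨
    -- (R2)
    (3 ≤ g ∧ w = (fy g r n 1 * fy g r n 2 * fy g r n 3 * fz g r n *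
          fy g r n 4 * fy g r n 5) ^ 12 *
        ((fx g r n 0 * fy g r n 1 * fy g r n 2 * fy g r n 3 * fz g r n *
          fy g r n 4 * fy g r n 5) ^ 9)⁻¹) ∨
    -- (R3)
    (∃ i j k : ℕ, k < j ∧ j < i ∧ i ≤ r ∧
        w = fx g r n k * Wrel g r n i j * (Wrel g r n i j * fx g r n k)⁻¹) ∨
    -- (R4)
    (2 ≤ g ∧ ∃ i j : ℕ, j < i ∧ i ≤ r ∧
        w = fy g r n 2 * Wrel g r n i j * (Wrel g r n i j * fy g r n 2)⁻¹) ∨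
    -- (R5)
    (2 ≤ g ∧ 1 ≤ r ∧ w = fu g r n 1 *
        ((fx g r n 0 * fx g r n 1 * fy g r n 1 * fy g r n 2 * fy g r n 3 * fz g r n) ^ 5 *
          ((fx g r n 1 * fy g r n 1 * fy g r n 2 * fy g r n 3 * fz g r n) ^ 6)⁻¹)⁻¹) ∨
    -- (R6)
    (2 ≤ g ∧ ∃ i : ℕ, 1 ≤ i ∧ i ≤ r - 1 ∧
        w = fu g r n (i + 1) *
          ((fx g r n i * fx g r n (i + 1) * fy g r n 1 * fy g r n 2 * fy g r n 3 *
              fz g r n) ^ 5 *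
            ((fx g r n (i + 1) * fy g r n 1 * fy g r n 2 * fy g r n 3 * fz g r n) ^ 6)⁻¹ *
            (fx g r n 0 * fy g r n 1 * fx g r n (i + 1)) ^ 4 *
            ((fx g r n 0 * fx g r n i * fy g r n 1 * fx g r n (i + 1)) ^ 3)⁻¹)⁻¹) ∨
    -- (R7)
    (2 ≤ n ∧ w = (fv g r n 1 * fx g r n (r + 1) * fy g r n 1 * fx g r n r) ^ 4 *
        ((fv g r n 1 * fx g r n (r + 1) * fy g r n 1) ^ 6)⁻¹) ∨
    -- (R8a)
    (1 ≤ n ∧ 2 ≤ g ∧ r = 0 ∧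
        w = (fx g r n 0 * fx g r n 1 * fy g r n 1 * fy g r n 2 * fy g r n 3 * fz g r n) ^ 5 *
          ((fx g r n 1 * fy g r n 1 * fy g r n 2 * fy g r n 3 * fz g r n) ^ 6)⁻¹) ∨
    -- (R8b)
    (1 ≤ n ∧ 2 ≤ g ∧ 1 ≤ r ∧
        w = (fx g r n r * fx g r n (r + 1) * fy g r n 1 * fy g r n 2 * fy g r n 3 *
            fz g r n) ^ 5 *
          ((fx g r n (r + 1) * fy g r n 1 * fy g r n 2 * fy g r n 3 * fz g r n) ^ 6)⁻¹ *
          ((fx g r n 0 * fx g r n r * fy g r n 1 * fx g r n (r + 1)) ^ 3 *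
            ((fx g r n 0 * fy g r n 1 * fx g r n (r + 1)) ^ 4)⁻¹)⁻¹)}

/-- The group `G(g,r,n)`: the quotient of the Artin group `A(Γ_{g,r,n})` by the
relations (R1)–(R8b) of Theorem 3.1. -/
abbrev G (g r n : ℕ) := PresentedGroup (artinRels g r n ∪ extraRels g r n)

/-- The image of `x_i` in `G(g,r,n)`. -/
def X (g r n i : ℕ) : G g r n := PresentedGroup.mk _ (fx g r n i)

/-- The image of `y_j` in `G(g,r,n)`. -/
def Y (g r n j : ℕ) : G g r n := PresentedGroup.mk _ (fy g r n j)

/-- The image of `z` in `G(g,r,n)`. -/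
def Z (g r n : ℕ) : G g r n := PresentedGroup.mk _ (fz g r n)

/-- The image of `u_i` in `G(g,r,n)`. -/
def U (g r n i : ℕ) : G g r n := PresentedGroup.mk _ (fu g r n i)

/-- The image of `v_i` in `G(g,r,n)`. -/
def V (g r n i : ℕ) : G g r n := PresentedGroup.mk _ (fv g r n i)

/-- `A_i = x_r^{1-i}(x_{r+1}v_1v_2⋯v_{i-1})^i` in `G(g,r,n)` (so `A_0 = x_r` and
`A_1 = x_{r+1}`). -/
def A (g r n i : ℕ) : G g r n :=
  X g r n r ^ ((1 : ℤ) - (i : ℤ)) *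
    (X g r n (r + 1) * ((List.range (i - 1)).map fun k => V g r n (k + 1)).prod) ^ i

end LabruereParis

lemma SemiconjBy.commute_of_commute {H : Type*} [Group H] {a x y c : H} (h : SemiconjBy a x y)
    (ha : Commute c a) (hx : Commute c x) : Commute c y := by
  rw [eq_mul_inv_of_mul_eq h.eq.symm]
  exact (ha.mul_right hx).mul_right ha.inv_right

namespace ArtinTypeB

variable {H : Type*} [Group H]

/-- `t, v 1, …, v (N - 1)` satisfy the defining relations of the Artin group of type `B_N`,
`t` being the end of the edge labelled `4`. -/
structure SatisfiesRelations (t : H) (v : ℕ → H) (N : ℕ) : Prop where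
  braid_t : t * v 1 * t * v 1 = v 1 * t * v 1 * t
  commute_t : ∀ k, 2 ≤ k → k < N → Commute t (v k)
  braid_v : ∀ k, 1 ≤ k → k + 1 < N → v k * v (k + 1) * v k = v (k + 1) * v k * v (k + 1)
  commute_v : ∀ j k, 1 ≤ j → j + 2 ≤ k → k < N → Commute (v j) (v k)

def ascProd (v : ℕ → H) (m : ℕ) : H := ((List.range m).map fun k => v (k + 1)).prod

/-- `descProd v a l = v a * v (a - 1) * ⋯ * v (a - l + 1)`. -/
def descProd (v : ℕ → H) : ℕ → ℕ → H
  | _, 0 => 1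
  | a, l + 1 => v a * descProd v (a - 1) l

def coxElt (t : H) (v : ℕ → H) (m : ℕ) : H := t * ascProd v m

/-- The Garside element of type `B_i`. -/
def fullTwist (t : H) (v : ℕ → H) (i : ℕ) : H := coxElt t v (i - 1) ^ i

def jucysMurphy (t : H) (v : ℕ → H) : ℕ → H
  | 0 => t
  | m + 1 => v (m + 1) * jucysMurphy t v m * v (m + 1)

variable {t : H} {v : ℕ → H} {N : ℕ}

lemma ascProd_succ (v : ℕ → H) (m : ℕ) : ascProd v (m + 1) = ascProd v m * v (m + 1) := by
  simp [ascProd, List.range_succ]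

lemma coxElt_succ (t : H) (v : ℕ → H) (m : ℕ) :
    coxElt t v (m + 1) = coxElt t v m * v (m + 1) := by
  rw [coxElt, coxElt, ascProd_succ, mul_assoc]

lemma descProd_succ_succ (v : ℕ → H) (a l : ℕ) :
    descProd v (a + 1) (l + 1) = v (a + 1) * descProd v a l := rfl

lemma fullTwist_zero (t : H) (v : ℕ → H) : fullTwist t v 0 = 1 := pow_zero _

lemma jucysMurphy_eq_descProd_mul_coxElt (t : H) (v : ℕ → H) :
    ∀ m, jucysMurphy t v m = descProd v m m * coxElt t v m
  | 0 => by simp [jucysMurphy, descProd, coxElt, ascProd]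
  | m + 1 => by
    rw [jucysMurphy, jucysMurphy_eq_descProd_mul_coxElt t v m, coxElt_succ]
    simp only [descProd, Nat.add_sub_cancel, mul_assoc]

namespace SatisfiesRelations

lemma commute_ascProd (hB : SatisfiesRelations t v N) {j k : ℕ} (hjk : j + 2 ≤ k) (hk : k < N) :
    Commute (ascProd v j) (v k) := by
  induction j with
  | zero => exact Commute.one_left _
  | succ j ih =>
    rw [ascProd_succ]
    exact (ih (by omega)).mul_left (hB.commute_v (j + 1) k (by omega) hjk hk)

lemma commute_coxElt (hB : SatisfiesRelations t v N) {j k : ℕ} (hjk : j + 2 ≤ k) (hk : k < N) :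
    Commute (coxElt t v j) (v k) :=
  (hB.commute_t k (by omega) hk).mul_left (hB.commute_ascProd hjk hk)

lemma semiconjBy_coxElt (hB : SatisfiesRelations t v N) {m k : ℕ} (hk : 1 ≤ k) (hkm : k < m)
    (hm : m < N) : SemiconjBy (coxElt t v m) (v k) (v (k + 1)) := by
  induction m with
  | zero => omega
  | succ m ih =>
    rcases Nat.lt_or_ge k m with hlt | hge
    · rw [coxElt_succ]
      exact (ih hlt (by omega)).mul_left (hB.commute_v k (m + 1) hk (by omega) hm).symm
    · obtain rfl : k = m := by omega
      obtain ⟨j, rfl⟩ : ∃ j, k = j + 1 := ⟨k - 1, by omega⟩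
      rw [coxElt_succ, coxElt_succ, mul_assoc]
      refine SemiconjBy.mul_left (hB.commute_coxElt (j := j) (k := j + 1 + 1) le_rfl hm) ?_
      rw [SemiconjBy, ← mul_assoc, hB.braid_v (j + 1) hk hm, mul_assoc]

lemma semiconjBy_coxElt_pow (hB : SatisfiesRelations t v N) {m : ℕ} (hm : m < N) :
    ∀ d k, 1 ≤ k → k + d ≤ m → SemiconjBy (coxElt t v m ^ d) (v k) (v (k + d))
  | 0, k, _, _ => by simp
  | d + 1, k, hk, hkd => by
    rw [pow_succ, ← add_comm 1 d, ← add_assoc]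
    exact (hB.semiconjBy_coxElt_pow hm d (k + 1) (by omega) (by omega)).mul_left
      (hB.semiconjBy_coxElt hk (by omega) hm)

lemma semiconjBy_coxElt_descProd (hB : SatisfiesRelations t v N) {m : ℕ} (hm : m < N) :
    ∀ l a, l ≤ a → a < m → SemiconjBy (coxElt t v m) (descProd v a l) (descProd v (a + 1) l)
  | 0, _, _, _ => SemiconjBy.one_right _
  | l + 1, a, hl, ha => by
    obtain ⟨b, rfl⟩ : ∃ b, a = b + 1 := ⟨a - 1, by omega⟩
    exact (hB.semiconjBy_coxElt (by omega) ha hm).mul_right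
      (hB.semiconjBy_coxElt_descProd hm l b (by omega) (by omega))

lemma commute_descProd (hB : SatisfiesRelations t v N) {j : ℕ} (hj : j < N) :
    ∀ l a, l ≤ a → a + 2 ≤ j → Commute (v j) (descProd v a l)
  | 0, _, _, _ => Commute.one_right _
  | l + 1, a, hl, ha =>
    (hB.commute_v a j (by omega) ha hj).symm.mul_right
      (hB.commute_descProd hj l (a - 1) (by omega) (by omega))

lemma v_mul_coxElt_mul_v (hB : SatisfiesRelations t v N) {m : ℕ} (hm1 : 1 ≤ m)
    (hm : m + 1 < N) :
    v (m + 1) * coxElt t v m * v (m + 1) = coxElt t v m * v (m + 1) * v m := by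
  obtain ⟨j, rfl⟩ : ∃ j, m = j + 1 := ⟨m - 1, by omega⟩
  have hc : Commute (coxElt t v j) (v (j + 1 + 1)) := hB.commute_coxElt le_rfl hm
  calc v (j + 1 + 1) * coxElt t v (j + 1) * v (j + 1 + 1)
      = coxElt t v j * (v (j + 1 + 1) * v (j + 1) * v (j + 1 + 1)) := by
        rw [coxElt_succ, ← mul_assoc, ← hc.eq]
        simp only [mul_assoc]
    _ = coxElt t v (j + 1) * v (j + 1 + 1) * v (j + 1) := by
        rw [← hB.braid_v (j + 1) hm1 hm, coxElt_succ]
        simp only [mul_assoc]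

lemma descProd_mul_coxElt_mul_v (hB : SatisfiesRelations t v N) {m k : ℕ} (hk : 1 ≤ k)
    (hkm : k ≤ m) (hm : m + 1 < N) :
    descProd v (m + 1) k * coxElt t v m * v (m + 1) =
      coxElt t v m * descProd v (m + 1) (k + 1) := by
  obtain ⟨l, rfl⟩ : ∃ l, k = l + 1 := ⟨k - 1, by omega⟩
  obtain ⟨j, rfl⟩ : ∃ j, m = j + 1 := ⟨m - 1, by omega⟩
  have hshift := (hB.semiconjBy_coxElt_descProd (m := j + 1) (by omega) l j (by omega)
    (by omega)).eq
  have hcomm := hB.commute_descProd (j := j + 1 + 1) hm l j (by omega) le_rfl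
  calc descProd v (j + 1 + 1) (l + 1) * coxElt t v (j + 1) * v (j + 1 + 1)
      = v (j + 1 + 1) * (coxElt t v (j + 1) * descProd v j l) * v (j + 1 + 1) := by
        rw [hshift, descProd_succ_succ, mul_assoc (v _)]
    _ = v (j + 1 + 1) * coxElt t v (j + 1) * v (j + 1 + 1) * descProd v j l := by
        simp only [mul_assoc, hcomm.eq]
    _ = coxElt t v (j + 1) * descProd v (j + 1 + 1) (l + 1 + 1) := by
        rw [hB.v_mul_coxElt_mul_v (by omega) hm, descProd_succ_succ, descProd_succ_succ]
        simp only [mul_assoc]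

lemma coxElt_succ_pow (hB : SatisfiesRelations t v N) {m : ℕ} (hm : m + 1 < N) :
    ∀ k, k ≤ m + 1 → coxElt t v (m + 1) ^ k = coxElt t v m ^ k * descProd v (m + 1) k
  | 0, _ => by simp [descProd]
  | k + 1, hk => by
    rcases Nat.eq_zero_or_pos k with rfl | hk0
    · simp [descProd, coxElt_succ]
    · rw [pow_succ, hB.coxElt_succ_pow hm k (by omega), coxElt_succ, mul_assoc,
        ← mul_assoc (descProd _ _ _), hB.descProd_mul_coxElt_mul_v hk0 (by omega) hm,
        ← mul_assoc, ← pow_succ]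

lemma fullTwist_succ (hB : SatisfiesRelations t v N) {m : ℕ} (hm : m < N) :
    fullTwist t v (m + 1) = fullTwist t v m * jucysMurphy t v m := by
  rcases m with _ | j
  · simp [fullTwist, coxElt, ascProd, jucysMurphy]
  · rw [jucysMurphy_eq_descProd_mul_coxElt, fullTwist, fullTwist, Nat.add_sub_cancel,
      Nat.add_sub_cancel, pow_succ, hB.coxElt_succ_pow hm (j + 1) le_rfl, mul_assoc]

lemma commute_jucysMurphy_t (hB : SatisfiesRelations t v N) :
    ∀ m, m < N → Commute (jucysMurphy t v m) t
  | 0, _ => Commute.refl t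
  | m + 1, hm => by
    rcases Nat.eq_zero_or_pos m with rfl | hm0
    · show v 1 * t * v 1 * t = t * (v 1 * t * v 1)
      rw [← hB.braid_t]
      simp only [mul_assoc]
    · have hv := (hB.commute_t (m + 1) (by omega) hm).symm
      exact (hv.mul_left ((hB.commute_jucysMurphy_t m (by omega)))).mul_left hv

lemma commute_jucysMurphy_v_of_add_two_le (hB : SatisfiesRelations t v N) :
    ∀ m j, m + 2 ≤ j → j < N → Commute (jucysMurphy t v m) (v j)
  | 0, j, hj, hjN => hB.commute_t j hj hjN
  | m + 1, j, hj, hjN => by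
    have hv := hB.commute_v (m + 1) j (by omega) hj hjN
    exact (hv.mul_left (hB.commute_jucysMurphy_v_of_add_two_le m j (by omega) hjN)).mul_left hv

lemma commute_jucysMurphy_v_of_lt (hB : SatisfiesRelations t v N) :
    ∀ m j, 1 ≤ j → j < m → m < N → Commute (jucysMurphy t v m) (v j)
  | 0, _, _, hj, _ => absurd hj (Nat.not_lt_zero _)
  | m + 1, j, hj1, hjm, hm => by
    rcases Nat.lt_or_ge j m with hlt | hge
    · have hv := (hB.commute_v j (m + 1) hj1 (by omega) hm).symm
      exact (hv.mul_left (hB.commute_jucysMurphy_v_of_lt m j hj1 hlt (by omega))).mul_left hv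
    · obtain rfl : j = m := by omega
      obtain ⟨l, rfl⟩ : ∃ l, j = l + 1 := ⟨j - 1, by omega⟩
      set a := v (l + 1)
      set b := v (l + 1 + 1)
      set T := jucysMurphy t v l
      have hbr : a * b * a = b * a * b := hB.braid_v (l + 1) hj1 hm
      have hT : Commute T b := hB.commute_jucysMurphy_v_of_add_two_le l (l + 1 + 1) le_rfl hm
      show (b * (a * T * a) * b) * a = a * (b * (a * T * a) * b)
      calc b * (a * T * a) * b * a = b * a * T * (a * b * a) := by simp only [mul_assoc]
        _ = b * a * (T * b) * a * b := by rw [hbr]; simp only [mul_assoc]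
        _ = (b * a * b) * T * a * b := by rw [hT.eq]; simp only [mul_assoc]
        _ = a * (b * (a * T * a) * b) := by rw [← hbr]; simp only [mul_assoc]

lemma commute_fullTwist_t (hB : SatisfiesRelations t v N) :
    ∀ i, i ≤ N → Commute (fullTwist t v i) t
  | 0, _ => by rw [fullTwist_zero]; exact Commute.one_left t
  | i + 1, hi => by
    rw [hB.fullTwist_succ (by omega)]
    exact (hB.commute_fullTwist_t i (by omega)).mul_left
      (hB.commute_jucysMurphy_t i (by omega))

lemma commute_fullTwist_v_of_lt (hB : SatisfiesRelations t v N) :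
    ∀ i k, 1 ≤ k → k < i → i ≤ N → Commute (fullTwist t v i) (v k)
  | 0, _, _, hk, _ => absurd hk (Nat.not_lt_zero _)
  | m + 1, k, hk1, hkm, hm => by
    have hsmall : ∀ k, 1 ≤ k → k < m → Commute (fullTwist t v (m + 1)) (v k) := by
      intro k hk1 hkm
      rw [hB.fullTwist_succ (by omega)]
      exact (hB.commute_fullTwist_v_of_lt m k hk1 hkm (by omega)).mul_left
        (hB.commute_jucysMurphy_v_of_lt m k hk1 hkm (by omega))
    rcases Nat.lt_or_ge k m with hlt | hge
    · exact hsmall k hk1 hlt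
    obtain rfl : k = m := by omega
    rcases Nat.lt_or_ge k 2 with hk2 | hk2
    · obtain rfl : k = 1 := by omega
      show Commute ((t * ascProd v 1) ^ 2) (v 1)
      rw [commute_iff_eq, show ascProd v 1 = v 1 by simp [ascProd], pow_two]
      simp only [← mul_assoc]
      rw [hB.braid_t]
    · -- `v_k` is conjugate to `v₁` by a power of `coxElt t v k`, which commutes with its power
      -- `fullTwist t v (k + 1)`.
      have hconj := hB.semiconjBy_coxElt_pow (m := k) (by omega) (k - 1) 1 le_rfl (by omega)
      rw [Nat.add_sub_cancel' (by omega : 1 ≤ k)] at hconj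
      exact hconj.commute_of_commute ((Commute.refl _).pow_pow _ _) (hsmall 1 le_rfl (by omega))

lemma commute_fullTwist_v_of_gt (hB : SatisfiesRelations t v N) {i k : ℕ} (hik : i < k)
    (hk : k < N) :
    Commute (fullTwist t v i) (v k) := by
  rcases i with _ | l
  · rw [fullTwist_zero]; exact Commute.one_left _
  · exact (hB.commute_coxElt (j := l) (by omega) hk).pow_left _

lemma commute_fullTwist_ascProd (hB : SatisfiesRelations t v N) {i : ℕ} (hi : i ≤ N) :
    ∀ l, l < i → Commute (fullTwist t v i) (ascProd v l)
  | 0, _ => Commute.one_right _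
  | l + 1, hl => by
    rw [ascProd_succ]
    exact (hB.commute_fullTwist_ascProd hi l (by omega)).mul_right
      (hB.commute_fullTwist_v_of_lt i (l + 1) (by omega) hl hi)

lemma commute_fullTwist_fullTwist (hB : SatisfiesRelations t v N) {i j : ℕ} (hji : j ≤ i)
    (hi : i ≤ N) :
    Commute (fullTwist t v i) (fullTwist t v j) := by
  rcases j with _ | l
  · rw [fullTwist_zero]; exact Commute.one_right _
  · exact ((hB.commute_fullTwist_t i hi).mul_right
      (hB.commute_fullTwist_ascProd hi l (by omega))).pow_right _

lemma fullTwist_pred_mul_fullTwist_succ (hB : SatisfiesRelations t v N) {i : ℕ} (hi1 : 1 ≤ i)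
    (hi : i < N) :
    fullTwist t v (i - 1) * fullTwist t v (i + 1) =
      fullTwist t v i * v i * fullTwist t v i * v i := by
  obtain ⟨l, rfl⟩ : ∃ l, i = l + 1 := ⟨i - 1, by omega⟩
  have hF : Commute (fullTwist t v l) (fullTwist t v (l + 1)) :=
    (hB.commute_fullTwist_fullTwist (by omega) hi.le).symm
  have hv : Commute (fullTwist t v l) (v (l + 1)) :=
    hB.commute_fullTwist_v_of_gt (by omega) hi
  calc fullTwist t v (l + 1 - 1) * fullTwist t v (l + 1 + 1)
      = fullTwist t v l *
          (fullTwist t v (l + 1) * (v (l + 1) * jucysMurphy t v l * v (l + 1))) := by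
        rw [hB.fullTwist_succ hi, Nat.add_sub_cancel, jucysMurphy]
    _ = fullTwist t v (l + 1) *
          (v (l + 1) * (fullTwist t v l * jucysMurphy t v l) * v (l + 1)) := by
        rw [hF.left_comm, ← mul_assoc (fullTwist t v l), ← mul_assoc (fullTwist t v l), hv.eq]
        simp only [mul_assoc]
    _ = fullTwist t v (l + 1) * v (l + 1) * fullTwist t v (l + 1) * v (l + 1) := by
        rw [← hB.fullTwist_succ (by omega)]
        simp only [mul_assoc]

lemma fullTwist_pred_mul_fullTwist_succ' (hB : SatisfiesRelations t v N) {i : ℕ} (hi1 : 1 ≤ i)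
    (hi : i < N) :
    fullTwist t v (i - 1) * fullTwist t v (i + 1) =
      v i * fullTwist t v i * v i * fullTwist t v i := by
  set D := fullTwist t v i
  set P := fullTwist t v (i - 1) * fullTwist t v (i + 1)
  have hP : Commute D P :=
    (hB.commute_fullTwist_fullTwist (Nat.sub_le i 1) hi.le).mul_right
      (hB.commute_fullTwist_fullTwist (Nat.le_succ i) hi).symm
  have hPD : P = D * v i * D * v i := hB.fullTwist_pred_mul_fullTwist_succ hi1 hi
  calc P = D⁻¹ * (D * P) := by group
    _ = D⁻¹ * (P * D) := by rw [hP.eq]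
    _ = v i * D * v i * D := by rw [hPD]; group

end SatisfiesRelations

end ArtinTypeB

lemma zpow_mul_mul_zpow_mul {H : Type*} [Group H] {c y z : H} (h : Commute c y) (a b : ℤ) :
    c ^ a * y * (c ^ b * z) = c ^ (a + b) * (y * z) := by
  rw [mul_assoc, ← h.zpow_left b |>.left_comm, ← mul_assoc, ← zpow_add]

namespace LabruereParis

variable {g r n : ℕ}

lemma mk_altWord_cox {a b : S g r n} (hab : a ≠ b) :
    PresentedGroup.mk (artinRels g r n ∪ extraRels g r n) (altWord a b (cox g r n a b)) =
      PresentedGroup.mk _ (altWord b a (cox g r n a b)) :=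
  PresentedGroup.mk_eq_mk_of_mul_inv_mem (Or.inl ⟨a, b, hab, rfl⟩)

lemma commute_of_cox_eq_two {a b : S g r n} (hab : a ≠ b) (h : cox g r n a b = 2) :
    Commute (PresentedGroup.of (rels := artinRels g r n ∪ extraRels g r n) a)
      (PresentedGroup.of b) := by
  have hw := mk_altWord_cox hab
  rw [h] at hw
  simpa [altWord, PresentedGroup.of, Commute, SemiconjBy] using hw

lemma braid_of_cox_eq_three {a b : S g r n} (hab : a ≠ b) (h : cox g r n a b = 3) :
    PresentedGroup.of (rels := artinRels g r n ∪ extraRels g r n) a * PresentedGroup.of b *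
        PresentedGroup.of a =
      PresentedGroup.of b * PresentedGroup.of a * PresentedGroup.of b := by
  have hw := mk_altWord_cox hab
  rw [h] at hw
  simpa [altWord, PresentedGroup.of, mul_assoc] using hw

lemma braid_of_cox_eq_four {a b : S g r n} (hab : a ≠ b) (h : cox g r n a b = 4) :
    PresentedGroup.of (rels := artinRels g r n ∪ extraRels g r n) a * PresentedGroup.of b *
        PresentedGroup.of a * PresentedGroup.of b =
      PresentedGroup.of b * PresentedGroup.of a * PresentedGroup.of b * PresentedGroup.of a := by
  have hw := mk_altWord_cox hab
  rw [h] at hw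
  simpa [altWord, PresentedGroup.of, mul_assoc] using hw

lemma X_eq_of {i : ℕ} (h : i < r + 2) :
    X g r n i = PresentedGroup.of (Sum.inl ⟨i, h⟩) := by
  rw [X, fx, dif_pos h, PresentedGroup.of]

lemma V_eq_of {k : ℕ} (h1 : 1 ≤ k) (h2 : k ≤ n - 1) :
    V g r n k =
      PresentedGroup.of (Sum.inr (Sum.inr (Sum.inr (Sum.inr ⟨k - 1, by omega⟩)))) := by
  rw [V, fv, dif_pos ⟨h1, h2⟩, PresentedGroup.of]

lemma V_eq_one {k : ℕ} (h : ¬(1 ≤ k ∧ k ≤ n - 1)) : V g r n k = 1 := by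
  rw [V, fv, dif_neg h, map_one]

lemma satisfiesRelations (hn : 2 ≤ n) :
    ArtinTypeB.SatisfiesRelations (X g r n (r + 1)) (V g r n) n where
  braid_t := by
    rw [V_eq_of le_rfl (by omega), X_eq_of (by omega)]
    exact braid_of_cox_eq_four (by simp) (by simp [cox])
  commute_t k hk hkn := by
    rw [V_eq_of (by omega) (by omega), X_eq_of (by omega)]
    exact commute_of_cox_eq_two (by simp) (by simp [cox]; omega)
  braid_v k hk hkn := by
    rw [V_eq_of hk (by omega), V_eq_of (k := k + 1) (by omega) (by omega)]
    refine braid_of_cox_eq_three (by simp; omega) ?_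
    simp only [cox, Fin.mk.injEq]
    rw [if_neg (by omega), if_pos (by omega)]
  commute_v j k hj hjk hkn := by
    rw [V_eq_of hj (by omega), V_eq_of (k := k) (by omega) (by omega)]
    refine commute_of_cox_eq_two (by simp; omega) ?_
    simp only [cox, Fin.mk.injEq]
    rw [if_neg (by omega), if_neg (by omega)]

lemma commute_X_X_succ : Commute (X g r n r) (X g r n (r + 1)) := by
  rw [X_eq_of (by omega), X_eq_of (i := r + 1) (by omega)]
  exact commute_of_cox_eq_two (by simp) (by simp [cox])

lemma commute_X_V (k : ℕ) : Commute (X g r n r) (V g r n k) := by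
  by_cases hk : 1 ≤ k ∧ k ≤ n - 1
  · rw [V_eq_of hk.1 hk.2, X_eq_of (by omega)]
    exact commute_of_cox_eq_two (by simp) (by simp [cox])
  · rw [V_eq_one hk]
    exact Commute.one_right _

lemma commute_X_fullTwist (i : ℕ) :
    Commute (X g r n r) (ArtinTypeB.fullTwist (X g r n (r + 1)) (V g r n) i) := by
  refine (commute_X_X_succ.mul_right ?_).pow_right _
  induction i - 1 with
  | zero => exact Commute.one_right _
  | succ l ih => rw [ArtinTypeB.ascProd_succ]; exact ih.mul_right (commute_X_V _)

lemma A_eq (i : ℕ) :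
    A g r n i = X g r n r ^ ((1 : ℤ) - i) * ArtinTypeB.fullTwist (X g r n (r + 1)) (V g r n) i :=
  rfl

lemma A_pred_mul_A_succ {i : ℕ} (hi : 1 ≤ i) :
    A g r n (i - 1) * A g r n (i + 1) = X g r n r ^ ((1 - i : ℤ) + (1 - i)) *
      (ArtinTypeB.fullTwist (X g r n (r + 1)) (V g r n) (i - 1) *
        ArtinTypeB.fullTwist (X g r n (r + 1)) (V g r n) (i + 1)) := by
  rw [A_eq, A_eq, zpow_mul_mul_zpow_mul (commute_X_fullTwist _)]
  congr 2
  omega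

lemma V_mul_A_mul_V_mul_A (i : ℕ) :
    V g r n i * A g r n i * V g r n i * A g r n i = X g r n r ^ ((1 - i : ℤ) + (1 - i)) *
      (V g r n i * ArtinTypeB.fullTwist (X g r n (r + 1)) (V g r n) i * V g r n i *
        ArtinTypeB.fullTwist (X g r n (r + 1)) (V g r n) i) := by
  have hVA := ((commute_X_V i).zpow_left ((1 : ℤ) - i)).symm.left_comm
    (ArtinTypeB.fullTwist (X g r n (r + 1)) (V g r n) i)
  rw [mul_assoc _ (V g r n i) (A g r n i), A_eq, hVA,
    zpow_mul_mul_zpow_mul ((commute_X_V i).mul_right (commute_X_fullTwist i))]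
  simp only [mul_assoc]

lemma A_mul_V_mul_A_mul_V (i : ℕ) :
    A g r n i * V g r n i * A g r n i * V g r n i = X g r n r ^ ((1 - i : ℤ) + (1 - i)) *
      (ArtinTypeB.fullTwist (X g r n (r + 1)) (V g r n) i * V g r n i *
        ArtinTypeB.fullTwist (X g r n (r + 1)) (V g r n) i * V g r n i) := by
  rw [mul_assoc _ (A g r n i) (V g r n i), A_eq, mul_assoc (X g r n r ^ _),
    zpow_mul_mul_zpow_mul ((commute_X_fullTwist i).mul_right (commute_X_V i))]
  simp only [mul_assoc]

end LabruereParis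

open LabruereParis in
theorem relation_T1_general (g r n : ℕ) (hn : 2 ≤ n)
    (i : ℕ) (hi1 : 1 ≤ i) (hi2 : i ≤ n - 1) :
    A g r n (i - 1) * A g r n (i + 1) = V g r n i * A g r n i * V g r n i * A g r n i ∧
    A g r n (i - 1) * A g r n (i + 1) = A g r n i * V g r n i * A g r n i * V g r n i := by
  have hB := satisfiesRelations (g := g) (r := r) hn
  rw [A_pred_mul_A_succ hi1, V_mul_A_mul_V_mul_A, A_mul_V_mul_A_mul_V]
  exact ⟨congrArg _ (hB.fullTwist_pred_mul_fullTwist_succ' hi1 (by omega)),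
    congrArg _ (hB.fullTwist_pred_mul_fullTwist_succ hi1 (by omega))⟩

open LabruereParis in
/-- Relation (T1) in the proof of Theorem 3.1 of Labruère–Paris: in `G(g,r,n)`,
`A_{i-1}A_{i+1} = v_iA_iv_iA_i = A_iv_iA_iv_i` for `1 ≤ i ≤ n-1`. -/
theorem relation_T1 (g r n : ℕ) (hg : 1 ≤ g) (hn : 2 ≤ n)
    (i : ℕ) (hi1 : 1 ≤ i) (hi2 : i ≤ n - 1) :
    A g r n (i - 1) * A g r n (i + 1) = V g r n i * A g r n i * V g r n i * A g r n i ∧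
    A g r n (i - 1) * A g r n (i + 1) = A g r n i * V g r n i * A g r n i * V g r n i :=
  relation_T1_general g r n hn i hi1 hi2
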